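/- arXiv:2512.20576 — 2 statements merged into one kernel-verified Lean document; each statement's English description precedes it below -/
import Mathlib

section
/- For the softmax policy π_θ(·|s) on a finite action set A, and any unit vector u, the sum over actions of the absolute value of the second directional derivative satisfies Σ_{a∈A} |d²/dα² π_{θ+αu}(a|s)|_{α=0}| ≤ 6. -/
/-- The softmax policy `π_θ(a|s) = exp(θ_{s,a}) / Σ_{a'} exp(θ_{s,a'})`. -/
noncomputable def softmaxPolicy {S A : Type*} [Fintype A]
    (θ : S × A → ℝ) (s : S) (a : A) : ℝ :=
  Real.exp (θ (s, a)) / ∑ a' : A, Real.exp (θ (s, a'))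

/-! Along a line `t ↦ x + t • c`, the softmax probabilities `p` satisfy `p' = p (c - m)`, where
`m` is the mean of `c` under `p`, and `m' = Var_p c`; hence `p'' = p ((c - m)² - Var_p c)`.
Summing absolute values gives at most `2 Var_p c ≤ 2 max_a c_a² ≤ 2`, as the entries of a unit
vector are at most `1` in absolute value. -/

open Finset Real

namespace Softmax

variable {A : Type*}

lemma hasDerivAt_exp_line (x c : A → ℝ) (b : A) (t : ℝ) :
    HasDerivAt (fun t : ℝ => exp ((x + t • c) b)) (exp ((x + t • c) b) * c b) t := by
  simpa using (((hasDerivAt_id t).smul_const (c b)).const_add (x b)).exp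

variable [Fintype A]

noncomputable def softmax (x : A → ℝ) (a : A) : ℝ :=
  exp (x a) / ∑ b, exp (x b)

noncomputable def mean (x c : A → ℝ) : ℝ :=
  ∑ b, softmax x b * c b

noncomputable def var (x c : A → ℝ) : ℝ :=
  ∑ b, softmax x b * (c b - mean x c) ^ 2

lemma sum_exp_pos [Nonempty A] (x : A → ℝ) : 0 < ∑ b, exp (x b) :=
  sum_pos (fun b _ => exp_pos (x b)) univ_nonempty

lemma softmax_nonneg (x : A → ℝ) (a : A) : 0 ≤ softmax x a :=
  div_nonneg (exp_nonneg _) (sum_nonneg fun b _ => exp_nonneg (x b))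

lemma var_nonneg (x c : A → ℝ) : 0 ≤ var x c :=
  sum_nonneg fun b _ => mul_nonneg (softmax_nonneg x b) (sq_nonneg _)

lemma sum_softmax [Nonempty A] (x : A → ℝ) : ∑ a, softmax x a = 1 := by
  simp only [softmax, ← sum_div, div_self (sum_exp_pos x).ne']

lemma sum_softmax_mul_sub_mean [Nonempty A] (x c : A → ℝ) :
    ∑ b, softmax x b * (c b - mean x c) = 0 := by
  simp only [mul_sub, sum_sub_distrib, ← sum_mul, sum_softmax, one_mul, mean, sub_self]

lemma var_eq_sum_mul_sub_mean [Nonempty A] (x c : A → ℝ) :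
    var x c = ∑ b, softmax x b * (c b - mean x c) * c b := by
  have h := sum_softmax_mul_sub_mean x c
  rw [var, ← sub_zero (∑ b, _ * c b), ← mul_zero (mean x c), ← h, mul_sum, ← sum_sub_distrib]
  exact sum_congr rfl fun b _ => by ring

lemma var_le_sum_softmax_mul_sq [Nonempty A] (x c : A → ℝ) :
    var x c ≤ ∑ b, softmax x b * c b ^ 2 := by
  have h : var x c = ∑ b, softmax x b * c b ^ 2 - mean x c ^ 2 := by
    rw [var_eq_sum_mul_sub_mean, sq, mean, sum_mul, ← sum_sub_distrib]
    exact sum_congr rfl fun b _ => by ring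
  linarith [sq_nonneg (mean x c)]

lemma var_le_one [Nonempty A] (x c : A → ℝ) (hc : ∀ b, |c b| ≤ 1) : var x c ≤ 1 := by
  refine (var_le_sum_softmax_mul_sq x c).trans ?_
  rw [← sum_softmax x]
  refine sum_le_sum fun b _ => mul_le_of_le_one_right (softmax_nonneg x b) ?_
  rw [sq_le_one_iff_abs_le_one]
  exact hc b

lemma hasDerivAt_softmax_line (x c : A → ℝ) (a : A) (t : ℝ) :
    HasDerivAt (fun t : ℝ => softmax (x + t • c) a)
      (softmax (x + t • c) a * (c a - mean (x + t • c) c)) t := by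
  have : Nonempty A := ⟨a⟩
  have hZ := sum_exp_pos (x + t • c)
  have h := (hasDerivAt_exp_line x c a t).div
    (HasDerivAt.fun_sum fun b _ => hasDerivAt_exp_line x c b t) hZ.ne'
  refine h.congr_deriv ?_
  simp only [mean, softmax, div_mul_eq_mul_div, ← sum_div]
  field_simp

lemma hasDerivAt_mean_line [Nonempty A] (x c : A → ℝ) (t : ℝ) :
    HasDerivAt (fun t : ℝ => mean (x + t • c) c) (var (x + t • c) c) t := by
  rw [var_eq_sum_mul_sub_mean]
  exact HasDerivAt.fun_sum fun b _ => (hasDerivAt_softmax_line x c b t).mul_const (c b)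

lemma deriv_softmax_line (x c : A → ℝ) (a : A) :
    deriv (fun t : ℝ => softmax (x + t • c) a) =
      fun t => softmax (x + t • c) a * (c a - mean (x + t • c) c) :=
  funext fun t => (hasDerivAt_softmax_line x c a t).deriv

lemma deriv_deriv_softmax_line (x c : A → ℝ) (a : A) (t : ℝ) :
    deriv (deriv fun t : ℝ => softmax (x + t • c) a) t =
      softmax (x + t • c) a * ((c a - mean (x + t • c) c) ^ 2 - var (x + t • c) c) := by
  have : Nonempty A := ⟨a⟩
  rw [deriv_softmax_line]
  refine ((hasDerivAt_softmax_line x c a t).mul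
    ((hasDerivAt_mean_line x c t).const_sub (c a))).deriv.trans ?_
  ring

lemma sum_abs_softmax_mul_sq_sub_var_le [Nonempty A] (x c : A → ℝ) :
    ∑ a, |softmax x a * ((c a - mean x c) ^ 2 - var x c)| ≤ 2 * var x c := by
  calc ∑ a, |softmax x a * ((c a - mean x c) ^ 2 - var x c)|
      ≤ ∑ a, (softmax x a * (c a - mean x c) ^ 2 + softmax x a * var x c) := by
        refine sum_le_sum fun a _ => ?_
        rw [abs_mul, abs_of_nonneg (softmax_nonneg x a), ← mul_add]
        refine mul_le_mul_of_nonneg_left ?_ (softmax_nonneg x a)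
        have := var_nonneg x c
        exact abs_sub_le_iff.2 ⟨by linarith, by linarith [sq_nonneg (c a - mean x c)]⟩
    _ = 2 * var x c := by
        rw [sum_add_distrib, ← sum_mul, sum_softmax, ← var]
        ring

end Softmax

open Softmax

/-- For the softmax policy on a finite action set and any unit
direction `u`, the sum over actions of the absolute value of the second
directional derivative satisfies `Σ_{a∈A} |d²/dα² π_{θ+αu}(a|s)|_{α=0}| ≤ 6`. -/
theorem softmax_second_directional_deriv_sum_le_six
    {S A : Type*} [Fintype S] [Fintype A]
    (θ u : S × A → ℝ)
    (hu : Real.sqrt (∑ p : S × A, (u p) ^ 2) = 1)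
    (s : S) :
    ∑ a : A,
      |deriv (deriv (fun α : ℝ => softmaxPolicy (θ + α • u) s a)) 0| ≤ 6 := by
  rcases isEmpty_or_nonempty A with hA | hA
  · simp
  set x : A → ℝ := fun a => θ (s, a)
  set c : A → ℝ := fun a => u (s, a)
  have hc : ∀ a, |c a| ≤ 1 := fun a => hu ▸
    Real.abs_le_sqrt (single_le_sum (fun p _ => sq_nonneg (u p)) (mem_univ (s, a)))
  have hsecond : ∀ a, deriv (deriv (fun α : ℝ => softmaxPolicy (θ + α • u) s a)) 0 =
      softmax x a * ((c a - mean x c) ^ 2 - var x c) := fun a => by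
    change deriv (deriv fun α : ℝ => softmax (x + α • c) a) 0 = _
    simpa using deriv_deriv_softmax_line x c a 0
  simp only [hsecond]
  linarith [sum_abs_softmax_mul_sq_sub_var_le x c, var_le_one x c hc]
end

section
/- (Performative performance difference) For two policies π and π' in a performative MDP where the reward r_π and transition P_π depend on the deployed policy, the difference of performative value functions satisfies: V_π^π(ρ) - V_{π'}^{π'}(ρ) = (1/(1-γ)) E_{(s,a) ~ d^π_{π',ρ}}[ A^{π'}_{π'}(s,a) + (r_π(s,a) - r_{π'}(s,a)) + γ(P_π(·|s,a) - P_{π'}(·|s,a))^⊤ V^π_π(·) ], where d^π_{π',ρ} is the discounted state-action occupancy of policy π in the environment induced by π', and A^{π'}_{π'}(s,a) = Q^{π'}_{π'}(s,a) - V^{π'}_{π'}(s) is the performative advantage. -/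
/-!
With `Δ = V_π^π - V_{π'}^{π'}`, the Bellman equation for `V_π^π` and the definition of the
advantage turn the integrand, averaged over `a ~ π(·|s)`, into `Δ s - γ E[Δ s']` with
`a ~ π(·|s)`, `s' ~ P_{π'}(·|s,a)`.
The flow equation of the occupancy measure makes the `d`-weighted sum of such one-step
differences telescope to `(1 - γ) ∑ ρ Δ`.
-/

open Finset

section

variable {S A R : Type*} [Fintype S] [Fintype A] [CommRing R]

theorem sum_occupancy_mul_sub_discounted_next (γ : R) (π : S → A → R) (P : S → A → S → R)
    (ρ d f : S → R)
    (hd : ∀ s, d s = (1 - γ) * ρ s + γ * ∑ s'', ∑ a'', d s'' * π s'' a'' * P s'' a'' s) :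
    ∑ s, d s * (f s - γ * ∑ a, π s a * ∑ s', P s a s' * f s')
      = (1 - γ) * ∑ s, ρ s * f s := by
  have hflow : ∑ s, d s * f s = (1 - γ) * ∑ s, ρ s * f s
      + γ * ∑ s'', ∑ a, ∑ s, d s'' * π s'' a * P s'' a s * f s := by
    calc ∑ s, d s * f s
        = ∑ s, ((1 - γ) * ρ s + γ * ∑ s'', ∑ a, d s'' * π s'' a * P s'' a s) * f s :=
          sum_congr rfl fun s _ => by rw [← hd s]
      _ = _ := by
          simp only [add_mul, sum_add_distrib, mul_sum, sum_mul, mul_assoc]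
          congr 1
          rw [sum_comm]
          exact sum_congr rfl fun _ _ => sum_comm
  simp only [mul_sub, sum_sub_distrib, hflow, mul_sum, mul_assoc, mul_left_comm _ γ]
  ring

theorem sum_policy_mul_advantage_add_shift (γ : R) (π : S → A → R) (r r' : S → A → R)
    (P P' : S → A → S → R) (V V' : S → R) (Q' Adv : S → A → R) (s : S)
    (hπ : ∑ a, π s a = 1)
    (hV : V s = ∑ a, π s a * (r s a + γ * ∑ s', P s a s' * V s'))
    (hQ : ∀ a, Q' s a = r' s a + γ * ∑ s', P' s a s' * V' s')
    (hAdv : ∀ a, Adv s a = Q' s a - V' s) :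
    ∑ a, π s a * (Adv s a + (r s a - r' s a) + γ * ∑ s', (P s a s' - P' s a s') * V s')
      = V s - V' s - γ * ∑ a, π s a * ∑ s', P' s a s' * (V s' - V' s') := by
  have hV' : V' s = ∑ a, π s a * V' s := by rw [← sum_mul, hπ, one_mul]
  rw [hV', hV, mul_sum, ← sum_sub_distrib, ← sum_sub_distrib]
  refine sum_congr rfl fun a _ => ?_
  simp only [hAdv, hQ, sub_mul, mul_sub, sum_sub_distrib]
  ring

end

theorem performative_performance_difference_general
    {S A : Type*} [Fintype S] [Fintype A]
    (γ : ℝ) (hγ1 : γ < 1)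
    (π : S → A → ℝ)                    -- the two policies
    (ρ : S → ℝ)                           -- initial state distribution
    (hπ_sum : ∀ s, ∑ a, π s a = 1)
    (rπ rπ' : S → A → ℝ)                  -- rewards induced by π and π'
    (Pπ Pπ' : S → A → S → ℝ)              -- transitions induced by π and π'
    (Vππ Vπ'π' : S → ℝ) (Qπ'π' : S → A → ℝ) (Adv : S → A → ℝ)
    (dStat : S → ℝ) (d : S → A → ℝ)
    -- Bellman equation for V_π^π (play π in the environment induced by π):
    (hVππ : ∀ s, Vππ s
      = ∑ a, π s a * (rπ s a + γ * ∑ s', Pπ s a s' * Vππ s'))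
    -- Q-function and performative advantage in the environment induced by π':
    (hQ : ∀ s a, Qπ'π' s a = rπ' s a + γ * ∑ s', Pπ' s a s' * Vπ'π' s')
    (hAdv : ∀ s a, Adv s a = Qπ'π' s a - Vπ'π' s)
    -- discounted occupancy of π under transitions P_{π'}, started from ρ:
    (hdStat : ∀ s, dStat s
      = (1 - γ) * ρ s + γ * ∑ s'', ∑ a'', dStat s'' * π s'' a'' * Pπ' s'' a'' s)
    (hd : ∀ s a, d s a = dStat s * π s a) :
    (∑ s, ρ s * Vππ s) - (∑ s, ρ s * Vπ'π' s)
      = (1 / (1 - γ)) *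
          ∑ s, ∑ a, d s a *
            (Adv s a + (rπ s a - rπ' s a)
              + γ * ∑ s', (Pπ s a s' - Pπ' s a s') * Vππ s') := by
  have hrow : ∀ s, ∑ a, d s a *
      (Adv s a + (rπ s a - rπ' s a) + γ * ∑ s', (Pπ s a s' - Pπ' s a s') * Vππ s')
      = dStat s * (Vππ s - Vπ'π' s
          - γ * ∑ a, π s a * ∑ s', Pπ' s a s' * (Vππ s' - Vπ'π' s')) := fun s => by
    simp only [hd, mul_assoc, ← mul_sum]
    rw [sum_policy_mul_advantage_add_shift γ π rπ rπ' Pπ Pπ' Vππ Vπ'π' Qπ'π' Adv s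
      (hπ_sum s) (hVππ s) (hQ s) (hAdv s)]
  have hγ : 1 - γ ≠ 0 := by linarith
  rw [sum_congr rfl fun s _ => hrow s,
    sum_occupancy_mul_sub_discounted_next γ π Pπ' ρ dStat _ hdStat,
    ← mul_assoc, one_div_mul_cancel hγ, one_mul, ← sum_sub_distrib]
  simp only [mul_sub]

/-- Performative performance difference lemma.  In a performative
MDP on finite state and action spaces, where rewards `r_π` and transitions
`P_π` depend on the deployed policy, the difference of performative value
functions satisfies
`V_π^π(ρ) - V_{π'}^{π'}(ρ)
  = (1/(1-γ)) E_{(s,a)~d^π_{π',ρ}}[A^{π'}_{π'}(s,a)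
      + (r_π(s,a) - r_{π'}(s,a))
      + γ(P_π(·|s,a) - P_{π'}(·|s,a))^⊤ V^π_π(·)]`.
The value functions are characterized by their Bellman equations, the `Q`- and
advantage functions by their definitions, and the occupancy measure
`d^π_{π',ρ}` (playing `π` in the environment induced by `π'`, starting from
`ρ`) by its flow equation. -/
theorem performative_performance_difference
    {S A : Type*} [Fintype S] [Fintype A]
    (γ : ℝ) (hγ0 : 0 < γ) (hγ1 : γ < 1)
    (π π' : S → A → ℝ)                    -- the two policies
    (ρ : S → ℝ)                           -- initial state distribution
    (hρ_nonneg : ∀ s, 0 ≤ ρ s) (hρ_sum : ∑ s, ρ s = 1)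
    (hπ_nonneg : ∀ s a, 0 ≤ π s a) (hπ_sum : ∀ s, ∑ a, π s a = 1)
    (hπ'_nonneg : ∀ s a, 0 ≤ π' s a) (hπ'_sum : ∀ s, ∑ a, π' s a = 1)
    (rπ rπ' : S → A → ℝ)                  -- rewards induced by π and π'
    (Pπ Pπ' : S → A → S → ℝ)              -- transitions induced by π and π'
    (Vππ Vπ'π' : S → ℝ) (Qπ'π' : S → A → ℝ) (Adv : S → A → ℝ)
    (dStat : S → ℝ) (d : S → A → ℝ)
    -- Bellman equation for V_π^π (play π in the environment induced by π):
    (hVππ : ∀ s, Vππ s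
      = ∑ a, π s a * (rπ s a + γ * ∑ s', Pπ s a s' * Vππ s'))
    -- Bellman equation for V_{π'}^{π'}:
    (hVπ'π' : ∀ s, Vπ'π' s
      = ∑ a, π' s a * (rπ' s a + γ * ∑ s', Pπ' s a s' * Vπ'π' s'))
    -- Q-function and performative advantage in the environment induced by π':
    (hQ : ∀ s a, Qπ'π' s a = rπ' s a + γ * ∑ s', Pπ' s a s' * Vπ'π' s')
    (hAdv : ∀ s a, Adv s a = Qπ'π' s a - Vπ'π' s)
    -- discounted occupancy of π under transitions P_{π'}, started from ρ:
    (hdStat : ∀ s, dStat s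
      = (1 - γ) * ρ s + γ * ∑ s'', ∑ a'', dStat s'' * π s'' a'' * Pπ' s'' a'' s)
    (hd : ∀ s a, d s a = dStat s * π s a) :
    (∑ s, ρ s * Vππ s) - (∑ s, ρ s * Vπ'π' s)
      = (1 / (1 - γ)) *
          ∑ s, ∑ a, d s a *
            (Adv s a + (rπ s a - rπ' s a)
              + γ * ∑ s', (Pπ s a s' - Pπ' s a s') * Vππ s') :=
  performative_performance_difference_general γ hγ1 π ρ hπ_sum rπ rπ' Pπ Pπ' Vππ Vπ'π' Qπ'π' Adv
    dStat d hVππ hQ hAdv hdStat hd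
end
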